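/- Let X : Ω → ℝⁿ and ε : Ω → ℝᵐ be square-integrable random vectors on a probability space, with X and ε independent and E[ε] = 0. Let F ∈ ℝ^{m×n}, set Y = F X + ε, Γ_X = E[X Xᵀ], and Γ_Y = E[Y Yᵀ]. Then the matrix Â = Γ_X Fᵀ Γ_Y† attains the global minimum of the Bayes risk: for every A ∈ ℝ^{n×m}, E‖Â Y − X‖₂² ≤ E‖A Y − X‖₂². -/

import Mathlib

open Matrix MeasureTheory

/-!
Write `Y = F X + ε`. Independence and `E ε = 0` give `E[X Yᵀ] = Γ_X Fᵀ`, so `Â = E[X Yᵀ] Γ_Y†`.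
If `Γ_Y M = 0` then `E‖Mᵀ Y‖² = tr (Mᵀ Γ_Y M) = 0`, so `Mᵀ Y = 0` almost surely and
`E[X Yᵀ] M = 0`; applied to `M = 1 - Γ_Y† Γ_Y` this yields the normal equations
`Â Γ_Y = E[X Yᵀ]`. They say that the residual `Â Y - X` is orthogonal in `L²` to every `B Y`,
so by Pythagoras `E‖A Y - X‖² = E‖Â Y - X‖² + E‖(A - Â) Y‖²`.
-/

/-- Second (cross-)moment matrix `E[X Yᵀ]` of two random vectors. -/
noncomputable def secondMoment {Ω : Type} [MeasurableSpace Ω] (μ : Measure Ω)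
    {n m : ℕ} (X : Ω → Fin n → ℝ) (Y : Ω → Fin m → ℝ) : Matrix (Fin n) (Fin m) ℝ :=
  Matrix.of fun i j => ∫ ω, X ω i * Y ω j ∂μ

/-- `Ad` is the Moore–Penrose pseudoinverse of `A` (the four Penrose conditions). -/
def IsMoorePenrose {m n : ℕ} (A : Matrix (Fin m) (Fin n) ℝ)
    (Ad : Matrix (Fin n) (Fin m) ℝ) : Prop :=
  A * Ad * A = A ∧ Ad * A * Ad = Ad ∧ (A * Ad)ᵀ = A * Ad ∧ (Ad * A)ᵀ = Ad * A


variable {Ω : Type} [MeasurableSpace Ω] {μ : Measure Ω} {k n m : ℕ}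

lemma MeasureTheory.MemLp.mulVec {Y : Ω → Fin m → ℝ} (hY : MemLp Y 2 μ)
    (M : Matrix (Fin k) (Fin m) ℝ) : MemLp (fun ω => M *ᵥ Y ω) 2 μ :=
  (Matrix.toLin' M).toContinuousLinearMap.comp_memLp' hY

lemma integrable_eval_mul_eval {X : Ω → Fin n → ℝ} {Y : Ω → Fin m → ℝ}
    (hX : MemLp X 2 μ) (hY : MemLp Y 2 μ) (i : Fin n) (j : Fin m) :
    Integrable (fun ω => X ω i * Y ω j) μ :=
  (hX.eval i).integrable_mul (hY.eval j)

lemma secondMoment_transpose (X : Ω → Fin n → ℝ) (Y : Ω → Fin m → ℝ) :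
    (secondMoment μ X Y)ᵀ = secondMoment μ Y X := by
  ext i j
  simp only [secondMoment, transpose_apply, of_apply, mul_comm]

lemma secondMoment_add_right {X : Ω → Fin n → ℝ} {Y Z : Ω → Fin m → ℝ}
    (hX : MemLp X 2 μ) (hY : MemLp Y 2 μ) (hZ : MemLp Z 2 μ) :
    secondMoment μ X (fun ω => Y ω + Z ω) = secondMoment μ X Y + secondMoment μ X Z := by
  ext i j
  simp only [secondMoment, of_apply, Matrix.add_apply, Pi.add_apply, mul_add]
  exact integral_add (integrable_eval_mul_eval hX hY i j) (integrable_eval_mul_eval hX hZ i j)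

lemma secondMoment_add_left {X Z : Ω → Fin n → ℝ} {Y : Ω → Fin m → ℝ}
    (hX : MemLp X 2 μ) (hZ : MemLp Z 2 μ) (hY : MemLp Y 2 μ) :
    secondMoment μ (fun ω => X ω + Z ω) Y = secondMoment μ X Y + secondMoment μ Z Y := by
  rw [← secondMoment_transpose, secondMoment_add_right hY hX hZ, transpose_add,
    secondMoment_transpose, secondMoment_transpose]

lemma secondMoment_sub_right {X : Ω → Fin n → ℝ} {Y Z : Ω → Fin m → ℝ}
    (hX : MemLp X 2 μ) (hY : MemLp Y 2 μ) (hZ : MemLp Z 2 μ) :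
    secondMoment μ X (fun ω => Y ω - Z ω) = secondMoment μ X Y - secondMoment μ X Z := by
  ext i j
  simp only [secondMoment, of_apply, Matrix.sub_apply, Pi.sub_apply, mul_sub]
  exact integral_sub (integrable_eval_mul_eval hX hY i j) (integrable_eval_mul_eval hX hZ i j)

lemma secondMoment_mulVec_right {X : Ω → Fin n → ℝ} {Y : Ω → Fin m → ℝ}
    (hX : MemLp X 2 μ) (hY : MemLp Y 2 μ) (M : Matrix (Fin k) (Fin m) ℝ) :
    secondMoment μ X (fun ω => M *ᵥ Y ω) = secondMoment μ X Y * Mᵀ := by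
  ext i j
  simp only [secondMoment, of_apply, mul_apply, transpose_apply, mulVec, dotProduct,
    Finset.mul_sum, mul_left_comm (X _ i), mul_comm _ (M j _)]
  rw [integral_finsetSum _ fun l _ => (integrable_eval_mul_eval hX hY i l).const_mul (M j l)]
  simp only [integral_const_mul]

lemma secondMoment_mulVec_left {X : Ω → Fin n → ℝ} {Y : Ω → Fin m → ℝ}
    (hX : MemLp X 2 μ) (hY : MemLp Y 2 μ) (M : Matrix (Fin k) (Fin n) ℝ) :
    secondMoment μ (fun ω => M *ᵥ X ω) Y = M * secondMoment μ X Y := by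
  rw [← secondMoment_transpose, secondMoment_mulVec_right hY hX, transpose_mul,
    secondMoment_transpose, transpose_transpose]

lemma trace_secondMoment_self {Z : Ω → Fin n → ℝ} (hZ : MemLp Z 2 μ) :
    trace (secondMoment μ Z Z) = ∫ ω, ∑ i, Z ω i ^ 2 ∂μ := by
  rw [integral_finsetSum _ fun i _ => (hZ.eval i).integrable_sq]
  simp only [trace, diag, secondMoment, of_apply, sq]

lemma integral_sum_sq_add_of_secondMoment_eq_zero {U V : Ω → Fin n → ℝ}
    (hU : MemLp U 2 μ) (hV : MemLp V 2 μ) (hUV : secondMoment μ U V = 0) :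
    ∫ ω, ∑ i, (U ω + V ω) i ^ 2 ∂μ = (∫ ω, ∑ i, U ω i ^ 2 ∂μ) + ∫ ω, ∑ i, V ω i ^ 2 ∂μ := by
  have hVU : secondMoment μ V U = 0 := by rw [← secondMoment_transpose, hUV, transpose_zero]
  have hUV' : MemLp (fun ω => U ω + V ω) 2 μ := hU.add hV
  rw [← trace_secondMoment_self hUV', ← trace_secondMoment_self hU,
    ← trace_secondMoment_self hV, secondMoment_add_left hU hV hUV',
    secondMoment_add_right hU hU hV, secondMoment_add_right hV hU hV, hUV, hVU]
  simp only [add_zero, zero_add, trace_add]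

theorem integral_sum_sq_mulVec_sub_le_of_mul_secondMoment_eq {X : Ω → Fin n → ℝ}
    {Y : Ω → Fin m → ℝ} (hX : MemLp X 2 μ) (hY : MemLp Y 2 μ) {Â : Matrix (Fin n) (Fin m) ℝ}
    (hÂ : Â * secondMoment μ Y Y = secondMoment μ X Y) (A : Matrix (Fin n) (Fin m) ℝ) :
    ∫ ω, ∑ i, (Â *ᵥ Y ω - X ω) i ^ 2 ∂μ ≤ ∫ ω, ∑ i, (A *ᵥ Y ω - X ω) i ^ 2 ∂μ := by
  have hR : MemLp (fun ω => Â *ᵥ Y ω - X ω) 2 μ := (hY.mulVec Â).sub hX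
  have hY_R : secondMoment μ Y (fun ω => Â *ᵥ Y ω - X ω) = 0 := by
    rw [secondMoment_sub_right hY (hY.mulVec Â) hX, secondMoment_mulVec_right hY hY,
      ← secondMoment_transpose X, ← hÂ, transpose_mul, secondMoment_transpose, sub_self]
  have horth : secondMoment μ (fun ω => (A - Â) *ᵥ Y ω) (fun ω => Â *ᵥ Y ω - X ω) = 0 := by
    rw [secondMoment_mulVec_left hY hR, hY_R, Matrix.mul_zero]
  have hsplit : ∀ ω, A *ᵥ Y ω - X ω = (A - Â) *ᵥ Y ω + (Â *ᵥ Y ω - X ω) := fun ω => by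
    rw [sub_mulVec]; abel
  simp_rw [hsplit]
  rw [integral_sum_sq_add_of_secondMoment_eq_zero (hY.mulVec (A - Â)) hR horth]
  exact le_add_of_nonneg_left (integral_nonneg fun ω => by positivity)

lemma ae_eq_zero_of_secondMoment_self_eq_zero {Z : Ω → Fin n → ℝ} (hZ : MemLp Z 2 μ)
    (h : secondMoment μ Z Z = 0) : Z =ᵐ[μ] 0 := by
  have hint : ∫ ω, ∑ i, Z ω i ^ 2 ∂μ = 0 := by
    rw [← trace_secondMoment_self hZ, h, trace_zero]
  have hsum := (integral_eq_zero_iff_of_nonneg (fun ω => by positivity)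
    (integrable_finsetSum _ fun i _ => (hZ.eval i).integrable_sq)).1 hint
  filter_upwards [hsum] with ω hω
  funext i
  have := (Finset.sum_eq_zero_iff_of_nonneg fun i _ => sq_nonneg (Z ω i)).1 hω i
    (Finset.mem_univ i)
  simpa using this

lemma secondMoment_eq_zero_of_ae_eq_zero (X : Ω → Fin n → ℝ) {Z : Ω → Fin m → ℝ}
    (hZ : Z =ᵐ[μ] 0) : secondMoment μ X Z = 0 := by
  ext i j
  refine integral_eq_zero_of_ae ?_
  filter_upwards [hZ] with ω hω
  simp [hω]

lemma secondMoment_mul_eq_zero_of_mul_eq_zero {X : Ω → Fin n → ℝ} {Y : Ω → Fin m → ℝ}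
    (hX : MemLp X 2 μ) (hY : MemLp Y 2 μ) {M : Matrix (Fin m) (Fin k) ℝ}
    (hM : secondMoment μ Y Y * M = 0) : secondMoment μ X Y * M = 0 := by
  have hZ : secondMoment μ (fun ω => Mᵀ *ᵥ Y ω) (fun ω => Mᵀ *ᵥ Y ω) = 0 := by
    rw [secondMoment_mulVec_left hY (hY.mulVec Mᵀ), secondMoment_mulVec_right hY hY,
      transpose_transpose, hM, Matrix.mul_zero]
  have := secondMoment_eq_zero_of_ae_eq_zero X
    (ae_eq_zero_of_secondMoment_self_eq_zero (hY.mulVec Mᵀ) hZ)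
  rwa [secondMoment_mulVec_right hX hY, transpose_transpose] at this

lemma secondMoment_mul_mul_secondMoment_self {X : Ω → Fin n → ℝ} {Y : Ω → Fin m → ℝ}
    (hX : MemLp X 2 μ) (hY : MemLp Y 2 μ) {G : Matrix (Fin m) (Fin m) ℝ}
    (hG : secondMoment μ Y Y * G * secondMoment μ Y Y = secondMoment μ Y Y) :
    secondMoment μ X Y * G * secondMoment μ Y Y = secondMoment μ X Y := by
  have hker : secondMoment μ Y Y * (1 - G * secondMoment μ Y Y) = 0 := by
    rw [Matrix.mul_sub, Matrix.mul_one, ← Matrix.mul_assoc, hG, sub_self]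
  have := secondMoment_mul_eq_zero_of_mul_eq_zero hX hY hker
  rwa [Matrix.mul_sub, Matrix.mul_one, ← Matrix.mul_assoc, sub_eq_zero, eq_comm] at this

lemma secondMoment_eq_zero_of_indepFun {X : Ω → Fin n → ℝ} {ε : Ω → Fin m → ℝ}
    (hX : AEStronglyMeasurable X μ) (hε : Integrable ε μ)
    (hindep : ProbabilityTheory.IndepFun X ε μ) (hmean : ∫ ω, ε ω ∂μ = 0) :
    secondMoment μ X ε = 0 := by
  ext i j
  have hij := (hindep.comp (measurable_pi_apply i) (measurable_pi_apply j))
    |>.integral_mul_eq_mul_integral ((continuous_apply i).comp_aestronglyMeasurable hX)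
    ((continuous_apply j).comp_aestronglyMeasurable hε.aestronglyMeasurable)
  have hεj : ∫ ω, ε ω j ∂μ = 0 := by rw [← eval_integral hε.eval, hmean, Pi.zero_apply]
  simpa [secondMoment, hεj] using hij

lemma secondMoment_mulVec_add_of_indepFun [IsFiniteMeasure μ] {X : Ω → Fin n → ℝ}
    {ε : Ω → Fin m → ℝ} (hX : MemLp X 2 μ) (hε : MemLp ε 2 μ)
    (hindep : ProbabilityTheory.IndepFun X ε μ) (hmean : ∫ ω, ε ω ∂μ = 0)
    (F : Matrix (Fin m) (Fin n) ℝ) :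
    secondMoment μ X (fun ω => F *ᵥ X ω + ε ω) = secondMoment μ X X * Fᵀ := by
  rw [secondMoment_add_right hX (hX.mulVec F) hε, secondMoment_mulVec_right hX hX,
    secondMoment_eq_zero_of_indepFun hX.aestronglyMeasurable (hε.integrable one_le_two)
      hindep hmean, add_zero]

/-- Unconstrained optimal linear inverse estimator: `Â = Γ_X Fᵀ Γ_Y†` attains the
global minimum of `E‖A Y − X‖₂²` over all `A`. -/
theorem inverse_full_rank_optimal {Ω : Type} [MeasurableSpace Ω]
    (μ : Measure Ω) [IsProbabilityMeasure μ] {n m : ℕ}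
    (X : Ω → Fin n → ℝ) (ε : Ω → Fin m → ℝ)
    (hX : MemLp X 2 μ) (hε : MemLp ε 2 μ)
    (hindep : ProbabilityTheory.IndepFun X ε μ)
    (hmean : (∫ ω, ε ω ∂μ) = 0)
    (F : Matrix (Fin m) (Fin n) ℝ)
    (GYd : Matrix (Fin m) (Fin m) ℝ)
    (hGYd : IsMoorePenrose
      (secondMoment μ (fun ω => F *ᵥ X ω + ε ω) (fun ω => F *ᵥ X ω + ε ω)) GYd) :
    ∀ A : Matrix (Fin n) (Fin m) ℝ,
      ∫ ω, ∑ i, ((secondMoment μ X X * Fᵀ * GYd) *ᵥ (F *ᵥ X ω + ε ω) - X ω) i ^ 2 ∂μ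
        ≤ ∫ ω, ∑ i, (A *ᵥ (F *ᵥ X ω + ε ω) - X ω) i ^ 2 ∂μ := by
  have hY : MemLp (fun ω => F *ᵥ X ω + ε ω) 2 μ := (hX.mulVec F).add hε
  refine integral_sum_sq_mulVec_sub_le_of_mul_secondMoment_eq hX hY ?_
  rw [← secondMoment_mulVec_add_of_indepFun hX hε hindep hmean F]
  exact secondMoment_mul_mul_secondMoment_self hX hY hGYd.1
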